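/- arXiv:2410.04930 — 3 statements merged into one kernel-verified Lean document; each statement's English description precedes it below -/
import Mathlib

section
/- For real numbers r > 0, d > 0, θ, and a natural number n with n·d < r, the distance √(r² + n²d² - 2rnd·cos θ) equals r - nd·cos θ + (n²d²/(2r))·sin²θ + E, where the error E satisfies |E| ≤ C·(nd)³/r² for an absolute constant C. -/
set_option maxHeartbeats 2000000 in

lemma fresnel_key (x c s : ℝ) (hx0 : 0 ≤ x) (hx1 : x < 1) (hcs : c^2 + s^2 = 1) :
    |Real.sqrt (1 + x^2 - 2*x*c) - (1 - x*c + x^2*s^2/2)| ≤ 36 * x^3 := by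
  have hc1 : c ≤ 1 := by nlinarith [sq_nonneg s, sq_nonneg (c-1)]
  have hc2 : -1 ≤ c := by nlinarith [sq_nonneg s, sq_nonneg (c+1)]
  have hss : s^2 = 1 - c^2 := by linarith
  rw [hss]
  have hx3 : (0:ℝ) ≤ x^3 := by positivity
  have hA : 0 ≤ 1 + x^2 - 2*x*c := by nlinarith [sq_nonneg (1 - x*c), sq_nonneg (x*s)]
  set s0 := Real.sqrt (1 + x^2 - 2*x*c) with hs0def
  have hsq : s0^2 = 1 + x^2 - 2*x*c := Real.sq_sqrt hA
  have hs0n : 0 ≤ s0 := Real.sqrt_nonneg _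
  clear_value s0
  have hxc : x*c ≤ x := by nlinarith
  rw [abs_le]
  by_cases hx : x ≤ 1/2
  · have ha : (1:ℝ)/2 ≤ 1 - x*c := by nlinarith
    have hg12 : (1:ℝ)/2 ≤ 1 - x*c + x^2*(1-c^2)/2 := by
      nlinarith [mul_nonneg (sq_nonneg x) (by nlinarith [sq_nonneg c] : (0:ℝ) ≤ 1 - c^2)]
    have hT : 0 ≤ 2*(1 - x*c + x^2*(1-c^2)/2) - (c - c^3) := by
      nlinarith [mul_nonneg (mul_nonneg (by linarith : (0:ℝ) ≤ 1-c) (by linarith : (0:ℝ) ≤ 1-c)) (by linarith : (0:ℝ) ≤ 1+c)]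
    have hU : 1 ≤ 4*(1 - x*c + x^2*(1-c^2)/2) + (c - c^3) := by
      nlinarith [mul_nonneg (mul_nonneg (by linarith : (0:ℝ) ≤ 1+c) (by linarith : (0:ℝ) ≤ 1+c)) (by linarith : (0:ℝ) ≤ 1-c)]
    have hb2 : (x^2*(1-c^2))^2 ≤ x^4 := by
      nlinarith [sq_nonneg (x^2*c^2), mul_nonneg (mul_nonneg (sq_nonneg x) (sq_nonneg x)) (sq_nonneg (c*c)), mul_nonneg (mul_nonneg (sq_nonneg x) (sq_nonneg x)) (sq_nonneg c)]
    have hx4 : x^4 ≤ x^3/2 := by nlinarith [mul_nonneg hx3 (by linarith : (0:ℝ) ≤ 1/2 - x)]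
    have hx38 : x^3 ≤ 1/8 := by nlinarith [mul_nonneg hx0 hx0, mul_nonneg (mul_nonneg hx0 hx0) (by linarith : (0:ℝ) ≤ 1/2 - x), mul_nonneg hx0 (by linarith : (0:ℝ) ≤ 1/2 - x)]
    have hx6 : x^6 ≤ x^3/8 := by nlinarith [mul_nonneg hx3 (by linarith : (0:ℝ) ≤ 1/8 - x^3)]
    have hup : s0 ≤ (1 - x*c + x^2*(1-c^2)/2) + x^3 := by
      have h1 : 1 + x^2 - 2*x*c ≤ ((1 - x*c + x^2*(1-c^2)/2) + x^3)^2 := by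
        nlinarith [mul_nonneg hx3 hT, sq_nonneg (x^2*(1-c^2)), sq_nonneg (x^3)]
      calc s0 = Real.sqrt (1 + x^2 - 2*x*c) := hs0def
        _ ≤ Real.sqrt (((1 - x*c + x^2*(1-c^2)/2) + x^3)^2) := Real.sqrt_le_sqrt h1
        _ = (1 - x*c + x^2*(1-c^2)/2) + x^3 := Real.sqrt_sq (by linarith)
    have hlow : (1 - x*c + x^2*(1-c^2)/2) - 2*x^3 ≤ s0 := by
      by_cases hgl : (1 - x*c + x^2*(1-c^2)/2) - 2*x^3 ≤ 0
      · linarith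
      · push_neg at hgl
        have h2 : ((1 - x*c + x^2*(1-c^2)/2) - 2*x^3)^2 ≤ 1 + x^2 - 2*x*c := by
          nlinarith [mul_le_mul_of_nonneg_left hU hx3]
        have := Real.sqrt_le_sqrt h2
        rw [Real.sqrt_sq hgl.le, ← hs0def] at this
        exact this
    constructor <;> nlinarith
  · push_neg at hx
    have hs02 : s0 ≤ 2 := by
      have h4 : 1 + x^2 - 2*x*c ≤ 4 := by nlinarith
      calc s0 = Real.sqrt (1 + x^2 - 2*x*c) := hs0def
        _ ≤ Real.sqrt 4 := Real.sqrt_le_sqrt h4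
        _ = 2 := by rw [show (4:ℝ) = 2^2 by norm_num, Real.sqrt_sq]; norm_num
    have hgup : 1 - x*c + x^2*(1-c^2)/2 ≤ 5/2 := by nlinarith [sq_nonneg (x*c)]
    have hglow : 0 ≤ 1 - x*c + x^2*(1-c^2)/2 := by
      nlinarith [mul_nonneg (sq_nonneg x) (by nlinarith [sq_nonneg c] : (0:ℝ) ≤ 1 - c^2)]
    have hx3' : (1:ℝ)/8 ≤ x^3 := by nlinarith
    constructor <;> nlinarith
/-- Fresnel (second-order) approximation of the near-field distance
√(r² + n²d² - 2rnd·cos θ) with quantitative error bound. -/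
theorem nearfield_distance_fresnel :
    ∃ C : ℝ, 0 < C ∧ ∀ (r d θ : ℝ) (n : ℕ), 0 < r → 0 < d → (n : ℝ) * d < r →
      ∃ E : ℝ,
        Real.sqrt (r^2 + (n:ℝ)^2 * d^2 - 2 * r * (n:ℝ) * d * Real.cos θ)
          = r - (n:ℝ) * d * Real.cos θ + ((n:ℝ)^2 * d^2 / (2 * r)) * (Real.sin θ)^2 + E ∧
        |E| ≤ C * ((n:ℝ) * d)^3 / r^2 := by
  refine ⟨36, by norm_num, fun r d θ n hr hd hnd => ?_⟩
  set x : ℝ := (n:ℝ) * d / r with hxdef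
  have hnd0 : 0 ≤ (n:ℝ) * d := by positivity
  have hx0 : 0 ≤ x := by positivity
  have hx1 : x < 1 := (div_lt_one hr).mpr hnd
  have hkey := fresnel_key x (Real.cos θ) (Real.sin θ) hx0 hx1
    (by rw [← Real.cos_sq_add_sin_sq θ])
  have harg : r^2 + (n:ℝ)^2 * d^2 - 2 * r * (n:ℝ) * d * Real.cos θ
      = r^2 * (1 + x^2 - 2*x*Real.cos θ) := by
    rw [hxdef]
    field_simp [hxdef]
  have hsqrt : Real.sqrt (r^2 + (n:ℝ)^2 * d^2 - 2 * r * (n:ℝ) * d * Real.cos θ)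
      = r * Real.sqrt (1 + x^2 - 2*x*Real.cos θ) := by
    rw [harg, Real.sqrt_mul (sq_nonneg r), Real.sqrt_sq hr.le]
  refine ⟨Real.sqrt (r^2 + (n:ℝ)^2 * d^2 - 2 * r * (n:ℝ) * d * Real.cos θ)
      - (r - (n:ℝ) * d * Real.cos θ + ((n:ℝ)^2 * d^2 / (2 * r)) * (Real.sin θ)^2), by ring, ?_⟩
  have hEeq : Real.sqrt (r^2 + (n:ℝ)^2 * d^2 - 2 * r * (n:ℝ) * d * Real.cos θ)
      - (r - (n:ℝ) * d * Real.cos θ + ((n:ℝ)^2 * d^2 / (2 * r)) * (Real.sin θ)^2)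
      = r * (Real.sqrt (1 + x^2 - 2*x*Real.cos θ)
          - (1 - x*Real.cos θ + x^2*(Real.sin θ)^2/2)) := by
    rw [hsqrt, hxdef]
    field_simp
  rw [hEeq, abs_mul, abs_of_pos hr]
  refine le_trans (mul_le_mul_of_nonneg_left hkey hr.le) (le_of_eq ?_)
  rw [hxdef]
  field_simp
end

section
/- For every real z and real θ, the Jacobi–Anger expansion holds: exp(i·z·cos θ) = Σ_{l=-∞}^{∞} i^l · J_l(z) · exp(i·l·θ), where J_l denotes the Bessel function of the first kind of integer order l, and the series converges absolutely. -/
/-- Bessel function of the first kind of integer order `l`. -/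
noncomputable def besselJ (l : ℤ) (x : ℝ) : ℝ :=
  (1 / Real.pi) * ∫ t in (0:ℝ)..Real.pi, Real.cos (l * t - x * Real.sin t)

open Complex Real intervalIntegral

namespace JA

noncomputable def g (z t : ℝ) : ℂ := Complex.exp (Complex.I * z * Real.sin t)
noncomputable def g1 (z t : ℝ) : ℂ := (Complex.I * z * (Real.cos t : ℂ)) * g z t
noncomputable def g2 (z t : ℝ) : ℂ :=
  (Complex.I * z * ((-Real.sin t : ℝ) : ℂ)) * g z t + (Complex.I * z * (Real.cos t : ℂ)) * g1 z t
noncomputable def h (z : ℝ) (n : ℤ) (t : ℝ) : ℂ :=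
  Complex.exp (Complex.I * (z * Real.sin t - n * t))

lemma inner_hasDeriv (z t : ℝ) :
    HasDerivAt (fun t : ℝ => Complex.I * z * (Real.sin t : ℂ)) (Complex.I * z * Real.cos t) t :=
  ((Real.hasDerivAt_sin t).ofReal_comp).const_mul (Complex.I * z)

lemma g_hasDeriv (z t : ℝ) : HasDerivAt (g z) (g1 z t) t := by
  have h := (inner_hasDeriv z t).cexp
  rw [show Complex.exp (Complex.I * z * (Real.sin t : ℂ)) * (Complex.I * z * Real.cos t)
      = g1 z t by rw [g1, g]; ring] at h
  exact h

lemma g1_hasDeriv (z t : ℝ) : HasDerivAt (g1 z) (g2 z t) t := by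
  have h1 : HasDerivAt (fun t : ℝ => Complex.I * z * (Real.cos t : ℂ))
      (Complex.I * z * ((-Real.sin t : ℝ) : ℂ)) t :=
    ((Real.hasDerivAt_cos t).ofReal_comp).const_mul (Complex.I * z)
  exact (h1.mul (g_hasDeriv z t) : _)

lemma g_cont (z : ℝ) : Continuous (g z) := by unfold g; fun_prop
lemma g1_cont (z : ℝ) : Continuous (g1 z) := by unfold g1 g; fun_prop
lemma g2_cont (z : ℝ) : Continuous (g2 z) := by unfold g2 g1 g; fun_prop

lemma g_norm (z t : ℝ) : ‖g z t‖ = 1 := by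
  rw [g, Complex.norm_exp]
  simp [Complex.mul_re]

lemma g1_norm (z t : ℝ) : ‖g1 z t‖ ≤ |z| := by
  rw [g1]
  rw [norm_mul, g_norm, mul_one]
  calc ‖Complex.I * z * (Real.cos t : ℂ)‖ = |z| * |Real.cos t| := by
        simp only [norm_mul, Complex.norm_I, one_mul, Complex.norm_real, Real.norm_eq_abs]
    _ ≤ |z| * 1 := by
        exact mul_le_mul_of_nonneg_left (Real.abs_cos_le_one t) (abs_nonneg z)
    _ = |z| := mul_one _

lemma g2_norm (z t : ℝ) : ‖g2 z t‖ ≤ |z| + z ^ 2 := by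
  rw [g2]
  refine (norm_add_le _ _).trans ?_
  have h1 : ‖Complex.I * z * ((-Real.sin t : ℝ) : ℂ) * g z t‖ ≤ |z| := by
    rw [norm_mul, g_norm, mul_one]
    calc ‖Complex.I * z * ((-Real.sin t : ℝ) : ℂ)‖ = |z| * |Real.sin t| := by
          simp only [norm_mul, Complex.norm_I, one_mul, Complex.norm_real, Real.norm_eq_abs,
            abs_neg]
      _ ≤ |z| * 1 := mul_le_mul_of_nonneg_left (Real.abs_sin_le_one t) (abs_nonneg z)
      _ = |z| := mul_one _
  have h2 : ‖Complex.I * z * (Real.cos t : ℂ) * g1 z t‖ ≤ z ^ 2 := by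
    rw [norm_mul]
    have : ‖Complex.I * z * (Real.cos t : ℂ)‖ ≤ |z| := by
      calc ‖Complex.I * z * (Real.cos t : ℂ)‖ = |z| * |Real.cos t| := by
            simp only [norm_mul, Complex.norm_I, one_mul, Complex.norm_real, Real.norm_eq_abs]
        _ ≤ |z| * 1 := mul_le_mul_of_nonneg_left (Real.abs_cos_le_one t) (abs_nonneg z)
        _ = |z| := mul_one _
    calc ‖Complex.I * z * (Real.cos t : ℂ)‖ * ‖g1 z t‖ ≤ |z| * |z| :=
          mul_le_mul this (g1_norm z t) (norm_nonneg _) (abs_nonneg z)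
      _ = z ^ 2 := by rw [← abs_mul, ← sq, abs_sq]
  linarith

lemma g_periodic (z : ℝ) : Function.Periodic (g z) (2 * π) := by
  intro t; simp [g, Real.sin_add_two_pi]

lemma h_cont (z : ℝ) (n : ℤ) : Continuous (h z n) := by unfold h; fun_prop

lemma h_periodic (z : ℝ) (n : ℤ) : Function.Periodic (h z n) (2 * π) := by
  intro t
  rw [h, h, ← mul_one (Complex.exp (Complex.I * ((z:ℂ) * Real.sin t - n * t))),
    ← Complex.exp_int_mul_two_pi_mul_I (-n), ← Complex.exp_add]
  congr 1
  push_cast [Real.sin_add_two_pi]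
  ring

lemma exp_neg_add_exp (φ : ℝ) :
    Complex.exp (-((φ : ℂ) * Complex.I)) + Complex.exp ((φ : ℂ) * Complex.I)
      = 2 * ((Real.cos φ : ℝ) : ℂ) := by
  rw [← neg_mul, Complex.exp_mul_I, Complex.exp_mul_I, Complex.cos_neg, Complex.sin_neg,
    ← Complex.ofReal_cos]
  ring

lemma h_neg_add (z : ℝ) (n : ℤ) (x : ℝ) :
    h z n (-x) + h z n x = 2 * ((Real.cos (n * x - z * Real.sin x) : ℝ) : ℂ) := by
  rw [h, h, show ((n : ℝ) * x - z * Real.sin x) = -(z * Real.sin x - n * x) by ring,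
    Real.cos_neg, ← exp_neg_add_exp (z * Real.sin x - n * x)]
  congr 2 <;> push_cast [Real.sin_neg] <;> ring

lemma integral_h (z : ℝ) (n : ℤ) :
    ∫ x in (0:ℝ)..2*π, h z n x
      = 2 * ((∫ t in (0:ℝ)..π, Real.cos (n * t - z * Real.sin t) : ℝ) : ℂ) := by
  have e1 : ∫ x in (0:ℝ)..2*π, h z n x = ∫ x in (-π)..π, h z n x := by
    have := (h_periodic z n).intervalIntegral_add_eq 0 (-π)
    rw [zero_add, show -π + 2*π = π by ring] at this
    exact this
  have i1 : IntervalIntegrable (h z n) MeasureTheory.volume (-π) 0 :=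
    ((h_cont z n).intervalIntegrable _ _)
  have i2 : IntervalIntegrable (h z n) MeasureTheory.volume 0 π :=
    ((h_cont z n).intervalIntegrable _ _)
  have e2 : ∫ x in (-π)..(0:ℝ), h z n x = ∫ x in (0:ℝ)..π, h z n (-x) := by
    rw [intervalIntegral.integral_comp_neg (fun x => h z n x), neg_zero]
  have i3 : IntervalIntegrable (fun x : ℝ => h z n (-x)) MeasureTheory.volume 0 π := by
    exact ((h_cont z n).comp continuous_neg).intervalIntegrable _ _
  rw [e1, ← intervalIntegral.integral_add_adjacent_intervals i1 i2, e2,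
    ← intervalIntegral.integral_add i3 i2]
  simp_rw [h_neg_add z n]
  rw [intervalIntegral.integral_const_mul, intervalIntegral.integral_ofReal]

lemma coeff_eq (z : ℝ) (n : ℤ) :
    fourierCoeffOn Real.two_pi_pos (g z) n = ((besselJ n z : ℝ) : ℂ) := by
  rw [fourierCoeffOn_eq_integral]
  have key : ∀ x : ℝ,
      (fourier (-n) (x : AddCircle (2*π - 0))) • g z x = h z n x := by
    intro x
    rw [fourier_coe_apply, smul_eq_mul, g, h, ← Complex.exp_add]
    congr 1
    have hπ : (π : ℂ) ≠ 0 := Complex.ofReal_ne_zero.mpr Real.pi_ne_zero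
    field_simp
    push_cast
    ring
  simp_rw [key]
  rw [integral_h, besselJ]
  rw [sub_zero, real_smul]
  have hπ : (π : ℂ) ≠ 0 := Complex.ofReal_ne_zero.mpr Real.pi_ne_zero
  push_cast
  field_simp

lemma fourier_norm_one {T : ℝ} (n : ℤ) (x : AddCircle T) : ‖(fourier n x : ℂ)‖ = 1 := by
  rw [fourier_apply, Circle.norm_coe]

lemma coeff_g2_bound (z : ℝ) (n : ℤ) :
    ‖fourierCoeffOn Real.two_pi_pos (g2 z) n‖ ≤ |z| + z ^ 2 := by
  rw [fourierCoeffOn_eq_integral, norm_smul]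
  have h1 : ‖∫ x in (0:ℝ)..2*π, fourier (-n) (x : AddCircle (2*π-0)) • g2 z x‖
      ≤ (|z| + z^2) * |2*π - 0| := by
    apply intervalIntegral.norm_integral_le_of_norm_le_const
    intro x _
    rw [norm_smul, fourier_norm_one, one_mul]
    exact g2_norm z x
  have h2 : ‖(1/(2*π - 0) : ℝ)‖ = 1/(2*π) := by
    rw [Real.norm_eq_abs, sub_zero, abs_of_pos (by positivity)]
  rw [h2]
  calc (1/(2*π)) * ‖∫ x in (0:ℝ)..2*π, fourier (-n) (x : AddCircle (2*π-0)) • g2 z x‖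
      ≤ (1/(2*π)) * ((|z| + z^2) * |2*π - 0|) := by
        apply mul_le_mul_of_nonneg_left h1 (by positivity)
    _ = |z| + z^2 := by
        rw [sub_zero, abs_of_pos Real.two_pi_pos]
        field_simp

lemma coeff_bound (z : ℝ) {n : ℤ} (hn : n ≠ 0) :
    ‖fourierCoeffOn Real.two_pi_pos (g z) n‖ ≤ (|z| + z^2) / (n:ℝ)^2 := by
  have e0 : g z (2*π) - g z 0 = 0 := by simp [g]
  have e1 : g1 z (2*π) - g1 z 0 = 0 := by simp [g1, g]
  have H1 := fourierCoeffOn_of_hasDerivAt Real.two_pi_pos hn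
    (fun x _ => g_hasDeriv z x) ((g1_cont z).intervalIntegrable _ _)
  have H2 := fourierCoeffOn_of_hasDerivAt Real.two_pi_pos hn
    (fun x _ => g1_hasDeriv z x) ((g2_cont z).intervalIntegrable _ _)
  rw [e0, mul_zero, zero_sub] at H1
  rw [e1, mul_zero, zero_sub] at H2
  have hπ : (π : ℂ) ≠ 0 := Complex.ofReal_ne_zero.mpr Real.pi_ne_zero
  have hn' : (n : ℂ) ≠ 0 := Int.cast_ne_zero.mpr hn
  have key : fourierCoeffOn Real.two_pi_pos (g z) n
      = (-1/((n:ℂ)^2)) * fourierCoeffOn Real.two_pi_pos (g2 z) n := by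
    rw [H1, H2]
    push_cast
    field_simp
    ring_nf
    field_simp
    ring_nf
    rw [Complex.I_sq]; ring
  rw [key, norm_mul]
  have hsc : ‖(-1/((n:ℂ)^2))‖ = 1/(n:ℝ)^2 := by
    rw [norm_div, norm_neg, norm_one, norm_pow, Complex.norm_intCast, _root_.sq_abs]
  rw [hsc]
  calc 1/(n:ℝ)^2 * ‖fourierCoeffOn Real.two_pi_pos (g2 z) n‖
      ≤ 1/(n:ℝ)^2 * (|z| + z^2) := by
        have h0 : (0:ℝ) ≤ 1/(n:ℝ)^2 := by positivity
        exact mul_le_mul_of_nonneg_left (coeff_g2_bound z n) h0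
    _ = (|z| + z^2)/(n:ℝ)^2 := by ring

lemma lift_continuous (z : ℝ) : Continuous ((g_periodic z).lift) := by
  rw [(QuotientAddGroup.isQuotientMap_mk (AddSubgroup.zmultiples (2*π))).continuous_iff]
  have : (g_periodic z).lift ∘ (QuotientAddGroup.mk : ℝ → AddCircle (2*π)) = g z :=
    funext fun t => (g_periodic z).lift_coe t
  rw [this]
  exact g_cont z

instance : Fact ((0:ℝ) < 2 * π) := ⟨Real.two_pi_pos⟩

lemma coeff_lift_eq (z : ℝ) (n : ℤ) :
    fourierCoeff ((g_periodic z).lift) n = fourierCoeffOn Real.two_pi_pos (g z) n := by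
  rw [fourierCoeff_eq_intervalIntegral _ n 0, fourierCoeffOn_eq_integral, zero_add]
  congr 1
  · rw [sub_zero]
  refine intervalIntegral.integral_congr fun x _ => ?_
  rw [Function.Periodic.lift_coe]
  rw [fourier_coe_apply, fourier_coe_apply, sub_zero]

lemma summable_norm_besselJ (z : ℝ) :
    Summable (fun n : ℤ => ‖((besselJ n z : ℝ) : ℂ)‖) := by
  have hs : Summable (fun n : ℤ => (|z| + z^2) / (n:ℝ)^2) := by
    have := (summable_one_div_int_pow (p := 2)).mpr one_lt_two
    simpa [div_eq_mul_inv] using this.mul_left (|z| + z^2)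
  apply Summable.of_norm_bounded_eventually hs
  have : ∀ᶠ n : ℤ in Filter.cofinite, n ≠ 0 := Filter.eventually_cofinite_ne 0
  filter_upwards [this] with n hn
  rw [norm_norm, ← coeff_eq z n]
  exact coeff_bound z hn

lemma besselJ_hasSum (z θ' : ℝ) :
    HasSum (fun n : ℤ => ((besselJ n z : ℝ) : ℂ) * fourier n ((θ' : ℝ) : AddCircle (2*π)))
      (g z θ') := by
  set F : C(AddCircle (2*π), ℂ) := ⟨(g_periodic z).lift, lift_continuous z⟩ with hF
  have hcF : ∀ n, fourierCoeff (⇑F) n = ((besselJ n z : ℝ) : ℂ) := fun n => by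
    rw [hF]; exact (coeff_lift_eq z n).trans (coeff_eq z n)
  have hs2 : Summable (fourierCoeff (⇑F)) := by
    apply Summable.of_norm
    simp_rw [hcF]
    exact summable_norm_besselJ z
  have hpt := has_pointwise_sum_fourier_series_of_summable hs2 ((θ' : ℝ) : AddCircle (2*π))
  have hFθ : F ((θ' : ℝ) : AddCircle (2*π)) = g z θ' := (g_periodic z).lift_coe θ'
  rw [hFθ] at hpt
  refine hpt.congr_fun fun n => ?_
  rw [hcF, smul_eq_mul]

lemma fourier_eval (n : ℤ) (θ : ℝ) :
    (fourier n (((θ + π/2 : ℝ)) : AddCircle (2*π)) : ℂ)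
      = Complex.I ^ n * Complex.exp (Complex.I * (n : ℂ) * (θ : ℂ)) := by
  rw [fourier_coe_apply]
  have hI : Complex.I ^ n = Complex.exp ((n : ℂ) * ((π/2 : ℝ) * Complex.I)) := by
    rw [Complex.exp_int_mul]
    congr 1
    rw [Complex.exp_mul_I]
    push_cast
    simp [Real.cos_pi_div_two, Real.sin_pi_div_two]
  rw [hI, ← Complex.exp_add]
  congr 1
  have hπ : (π : ℂ) ≠ 0 := Complex.ofReal_ne_zero.mpr Real.pi_ne_zero
  push_cast
  field_simp
  ring

end JA

/-- Jacobi–Anger expansion: exp(i z cos θ) = Σ_{l∈ℤ} iˡ J_l(z) e^{ilθ},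
with absolute convergence. -/
theorem jacobi_anger (z θ : ℝ) :
    Summable (fun l : ℤ =>
      ‖(Complex.I ^ l) * (besselJ l z : ℂ) * Complex.exp (Complex.I * (l : ℂ) * (θ : ℂ))‖) ∧
    ∑' l : ℤ, (Complex.I ^ l) * (besselJ l z : ℂ) * Complex.exp (Complex.I * (l : ℂ) * (θ : ℂ))
      = Complex.exp (Complex.I * (z : ℂ) * (Real.cos θ : ℂ)) := by
  have hnorm : ∀ l : ℤ,
      ‖(Complex.I ^ l) * (besselJ l z : ℂ) * Complex.exp (Complex.I * (l : ℂ) * (θ : ℂ))‖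
        = ‖((besselJ l z : ℝ) : ℂ)‖ := by
    intro l
    rw [norm_mul, norm_mul, norm_zpow, Complex.norm_I, one_zpow, one_mul]
    rw [show (Complex.I * (l : ℂ) * (θ : ℂ)) = ((l * θ : ℝ) : ℂ) * Complex.I by push_cast; ring]
    rw [Complex.norm_exp_ofReal_mul_I, mul_one]
  constructor
  · exact (JA.summable_norm_besselJ z).congr fun l => (hnorm l).symm
  · have hsum := JA.besselJ_hasSum z (θ + π/2)
    have hterm : ∀ n : ℤ,
        ((besselJ n z : ℝ) : ℂ) * fourier n (((θ + π/2 : ℝ)) : AddCircle (2*π))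
          = (Complex.I ^ n) * (besselJ n z : ℂ) * Complex.exp (Complex.I * (n : ℂ) * (θ : ℂ)) := by
      intro n
      rw [JA.fourier_eval n θ]
      ring
    have hg : JA.g z (θ + π/2) = Complex.exp (Complex.I * (z : ℂ) * (Real.cos θ : ℂ)) := by
      rw [JA.g, Real.sin_add_pi_div_two]
    rw [← hg]
    exact ((hsum.congr_fun fun n => (hterm n).symm).tsum_eq)
end

section
/- Let p(θ) = Σ_{k=0}^{n-1} c_k e^{ikθ} be a trigonometric polynomial with coefficient vector c ∈ ℂ^n. If there exists a Hermitian matrix Q ∈ ℂ^{n×n} with [[Q, c],[cᴴ, 1]] ⪰ 0 and Σ_{k} Q[k, k+j] = 1_{j=0} for all diagonals j, then sup_θ |p(θ)| ≤ 1. -/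
open ComplexOrder

private lemma sum_rotate {α β γ M : Type*} [AddCommMonoid M] (s : Finset α) (t : Finset β)
    (u : Finset γ) (f : α → β → γ → M) :
    ∑ a ∈ s, ∑ b ∈ t, ∑ x ∈ u, f a b x = ∑ x ∈ u, ∑ a ∈ s, ∑ b ∈ t, f a b x :=
  (Finset.sum_congr rfl fun _ _ => Finset.sum_comm).trans Finset.sum_comm

/-- Bounded real lemma (sufficiency) for positive trigonometric polynomials:
if [[Q, c],[cᴴ, 1]] ⪰ 0 and the diagonal sums of `Q` satisfy
`Σ_k Q[k, k+j] = 1_{j=0}`, then `sup_θ |Σ_k c_k e^{ikθ}| ≤ 1`. -/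
theorem bounded_real_lemma {n : ℕ} (c : Fin n → ℂ) (Q : Matrix (Fin n) (Fin n) ℂ)
    (hQ : Q.IsHermitian)
    (hblk : (Matrix.fromBlocks Q (fun i (_ : Unit) => c i) (fun (_ : Unit) j => star (c j))
        (1 : Matrix Unit Unit ℂ)).PosSemidef)
    (htr : ∀ j : ℤ, (∑ k : Fin n, ∑ l : Fin n,
        (if ((l : ℕ) : ℤ) - ((k : ℕ) : ℤ) = j then Q k l else 0))
        = if j = 0 then 1 else 0) :
    ∀ θ : ℝ, ‖∑ k : Fin n, c k * Complex.exp (Complex.I * ((k : ℕ) : ℂ) * (θ : ℂ))‖ ≤ 1 := by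
  intro θ
  set p : ℂ := ∑ k : Fin n, c k * Complex.exp (Complex.I * ((k : ℕ) : ℂ) * (θ : ℂ)) with hp
  set v : Fin n → ℂ := fun k => Complex.exp (-(Complex.I * ((k : ℕ) : ℂ) * (θ : ℂ))) with hv
  have hvconj : ∀ k, (starRingEnd ℂ) (v k)
      = Complex.exp (Complex.I * ((k : ℕ) : ℂ) * (θ : ℂ)) := by
    intro k
    rw [hv, ← Complex.exp_conj]
    congr 1
    simp [Complex.conj_ofReal]
  -- key identity : v* Q v = 1
  have hQsum : ∑ k : Fin n, ∑ l : Fin n,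
      (starRingEnd ℂ) (v k) * (Q k l * v l) = 1 := by
    have hterm : ∀ k l : Fin n, (starRingEnd ℂ) (v k) * (Q k l * v l)
        = Q k l * Complex.exp (-(Complex.I * (((((l : ℕ) : ℤ) - ((k : ℕ) : ℤ)) : ℤ) : ℂ)
            * (θ : ℂ))) := by
      intro k l
      rw [hvconj, hv]
      rw [mul_comm, mul_assoc, ← Complex.exp_add]
      push_cast
      ring_nf
    calc ∑ k : Fin n, ∑ l : Fin n, (starRingEnd ℂ) (v k) * (Q k l * v l)
        = ∑ k : Fin n, ∑ l : Fin n, ∑ j ∈ Finset.Icc (-(n : ℤ)) (n : ℤ),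
            (if ((l : ℕ) : ℤ) - ((k : ℕ) : ℤ) = j then
              Q k l * Complex.exp (-(Complex.I * (j : ℂ) * (θ : ℂ))) else 0) := by
          refine Finset.sum_congr rfl fun k _ => Finset.sum_congr rfl fun l _ => ?_
          rw [hterm k l, Finset.sum_ite_eq, if_pos]
          rw [Finset.mem_Icc]
          omega
      _ = ∑ j ∈ Finset.Icc (-(n : ℤ)) (n : ℤ),
            (∑ k : Fin n, ∑ l : Fin n,
              (if ((l : ℕ) : ℤ) - ((k : ℕ) : ℤ) = j then Q k l else 0))
              * Complex.exp (-(Complex.I * (j : ℂ) * (θ : ℂ))) := by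
          rw [sum_rotate]
          refine Finset.sum_congr rfl fun j _ => ?_
          simp only [Finset.sum_mul, ite_mul, zero_mul]
      _ = 1 := by
          simp only [htr]
          simp [Finset.sum_ite_eq, Finset.mem_Icc]
  have hpos := hblk.dotProduct_mulVec_nonneg (Sum.elim v fun _ : Unit => -(starRingEnd ℂ) p)
  simp only [dotProduct, Matrix.mulVec, Matrix.fromBlocks, Fintype.sum_sum_type,
    Sum.elim_inl, Sum.elim_inr, Matrix.of_apply, Pi.star_apply, Sum.elim_comp_inl,
    Sum.elim_comp_inr] at hpos
  have hone : ∀ (a b : Unit), (1 : Matrix Unit Unit ℂ) a b = 1 := by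
    intro a b; rw [Matrix.one_apply_eq]
  simp only [Finset.univ_unique, Finset.sum_singleton, hone, one_mul] at hpos
  have hcv : ∑ x : Fin n, star (c x) * v x = (starRingEnd ℂ) p := by
    rw [hp, map_sum]
    refine Finset.sum_congr rfl fun k _ => ?_
    rw [map_mul, ← hvconj k, Complex.conj_conj]
    rfl
  have hvc : ∑ x : Fin n, star (v x) * c x = p := by
    rw [hp]
    refine Finset.sum_congr rfl fun k _ => ?_
    rw [mul_comm]
    congr 1
    exact hvconj k
  simp only [mul_add, Finset.sum_add_distrib, Finset.mul_sum, ← mul_assoc] at hpos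
  rw [← Finset.sum_mul, hvc] at hpos
  rw [show ∑ x : Fin n, star (-(starRingEnd ℂ) p) * star (c x) * v x
      = star (-(starRingEnd ℂ) p) * (starRingEnd ℂ) p from by
    rw [← hcv, Finset.mul_sum]; exact Finset.sum_congr rfl fun k _ => by ring] at hpos
  have hQ1 : ∑ x : Fin n, ∑ x_1 : Fin n, star (v x) * Q x x_1 * v x_1 = 1 := by
    rw [← hQsum]
    exact Finset.sum_congr rfl fun k _ => Finset.sum_congr rfl fun l _ => by
      simp only [RCLike.star_def]; ring
  rw [hQ1] at hpos
  have hfin : (1 : ℂ) + p * -(starRingEnd ℂ) p +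
      (star (-(starRingEnd ℂ) p) * (starRingEnd ℂ) p
        + star (-(starRingEnd ℂ) p) * -(starRingEnd ℂ) p)
      = ((1 - Complex.normSq p : ℝ) : ℂ) := by
    simp only [star_neg, RCLike.star_def, Complex.conj_conj]
    rw [Complex.ofReal_sub, Complex.ofReal_one, ← Complex.mul_conj]
    ring
  rw [hfin] at hpos
  have h2 : Complex.normSq p ≤ 1 := by
    have := Complex.zero_le_real.mp hpos
    linarith
  have hnorm : ‖p‖ ^ 2 = Complex.normSq p := by
    rw [← Complex.sq_norm]
  nlinarith [norm_nonneg p, hnorm]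
end
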